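/- arXiv:0911.0508 — 3 statements merged into one kernel-verified Lean document; each statement's English description precedes it below -/
import Mathlib

section
/- Let G be a simple graph on m vertices, let G' be its complement graph, and let σ be any numbering of the common vertex set. Then Σ_{i=1}^{m} c_i + Σ_{i=1}^{m} q'_i = m(m+1)/2, where c_i is the number of vertices numbered ≤ i that are adjacent in G to at least one vertex numbered greater than i, and q'_i is the number of vertices that are adjacent in G' to every vertex numbered greater than i (for i = m this condition is vacuous, so q'_m = m). In particular, a numbering minimizes the Sum-Cut value Σ c_i on G if and only if it maximizes the Mod-Sum-Cut value Σ q'_i on G'. -/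
/-- Mod-Sum-Cut value of a numbering `σ` (0-based) of a graph `H`:
`Σ_i q_i` where `q_i` is the number of vertices adjacent (in `H`) to every
vertex numbered greater than `i`. -/
def modSumCut {m : ℕ} (H : SimpleGraph (Fin m)) [DecidableRel H.Adj]
    (σ : Fin m ≃ Fin m) : ℕ :=
  ∑ i : Fin m, (Finset.univ.filter fun v => ∀ u, i < σ u → H.Adj v u).card

/-- Sum-Cut value of a numbering `σ` (0-based) of a graph `G`:
`Σ_i c_i` where `c_i` is the number of vertices numbered `≤ i` that are
adjacent (in `G`) to at least one vertex numbered greater than `i`. -/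
def sumCut {m : ℕ} (G : SimpleGraph (Fin m)) [DecidableRel G.Adj]
    (σ : Fin m ≃ Fin m) : ℕ :=
  ∑ i : Fin m, (Finset.univ.filter fun v => σ v ≤ i ∧ ∃ u, i < σ u ∧ G.Adj v u).card

lemma gauss (m : ℕ) : ∑ i ∈ Finset.range m, (i + 1) = m * (m + 1) / 2 := by
  induction m with
  | zero => simp
  | succ n ih =>
    rw [Finset.sum_range_succ, ih]
    have h : (n + 1) * (n + 1 + 1) = n * (n + 1) + 2 * (n + 1) := by ring
    omega

lemma key {m : ℕ} (G : SimpleGraph (Fin m)) [DecidableRel G.Adj]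
    [DecidableRel Gᶜ.Adj] (σ : Fin m ≃ Fin m) :
    sumCut G σ + modSumCut Gᶜ σ = m * (m + 1) / 2 := by
  unfold sumCut modSumCut
  rw [← Finset.sum_add_distrib]
  have h : ∀ i : Fin m,
      (Finset.univ.filter fun v => σ v ≤ i ∧ ∃ u, i < σ u ∧ G.Adj v u).card +
      (Finset.univ.filter fun v => ∀ u, i < σ u → Gᶜ.Adj v u).card = (i : ℕ) + 1 := by
    intro i
    have hB : (Finset.univ.filter fun v => ∀ u, i < σ u → Gᶜ.Adj v u) =
        Finset.univ.filter fun v => σ v ≤ i ∧ ¬ ∃ u, i < σ u ∧ G.Adj v u := by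
      ext v
      simp only [Finset.mem_filter, Finset.mem_univ, true_and, SimpleGraph.compl_adj,
        not_exists, not_and]
      constructor
      · intro h
        have hv : σ v ≤ i := by
          by_contra hc
          push_neg at hc
          exact (h v hc).1 rfl
        exact ⟨hv, fun u hu hadj => (h u hu).2 hadj⟩
      · rintro ⟨hv, hq⟩ u hu
        refine ⟨fun he => absurd hu (by rw [he] at hv; omega), hq u hu⟩
    rw [hB]
    have hsplit := Finset.card_filter_add_card_filter_not
      (s := Finset.univ.filter fun v : Fin m => σ v ≤ i)
      (p := fun v => ∃ u, i < σ u ∧ G.Adj v u)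
    rw [Finset.filter_filter, Finset.filter_filter] at hsplit
    rw [hsplit]
    have : (Finset.univ.filter fun v : Fin m => σ v ≤ i).card =
        (Finset.Iic i).card := by
      apply Finset.card_bij (fun v _ => σ v)
      · intro v hv; simp only [Finset.mem_filter] at hv; simpa using hv.2
      · intro a ha b hb hab; exact σ.injective hab
      · intro b hb
        exact ⟨σ.symm b, by simpa using hb, by simp⟩
    rw [this, Fin.card_Iic]
  rw [Finset.sum_congr rfl (fun i _ => h i)]
  rw [Fin.sum_univ_eq_sum_range (fun i => i + 1)]
  exact gauss m

/-- For any numbering `σ` of a graph `G` on `m` vertices and its complement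
`Gᶜ`, the Sum-Cut value of `σ` on `G` plus the Mod-Sum-Cut value of `σ` on
`Gᶜ` equals `m(m+1)/2`; consequently `σ` minimizes Sum-Cut on `G` iff it
maximizes Mod-Sum-Cut on `Gᶜ`. -/
theorem stmt4 {m : ℕ} (G : SimpleGraph (Fin m)) [DecidableRel G.Adj]
    [DecidableRel Gᶜ.Adj] (σ : Fin m ≃ Fin m) :
    sumCut G σ + modSumCut Gᶜ σ = m * (m + 1) / 2 ∧
    ((∀ τ : Fin m ≃ Fin m, sumCut G σ ≤ sumCut G τ) ↔
      (∀ τ : Fin m ≃ Fin m, modSumCut Gᶜ τ ≤ modSumCut Gᶜ σ)) := by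
  refine ⟨key G σ, ?_⟩
  constructor
  · intro h τ
    have h1 := key G σ
    have h2 := key G τ
    have := h τ
    omega
  · intro h τ
    have h1 := key G σ
    have h2 := key G τ
    have := h τ
    omega
end

section
/- With the caterpillar construction and the additional hypothesis |L| > m·|a_r|: in every optimal solution of the tree instance T, the permutations assigned to the internal vertices r_1, …, r_m are all identical; equivalently, |p_i ∧ p_{i+1}| = |A| for all 1 ≤ i < m, where p_i is the permutation assigned to r_i. -/
/-- Length of the longest common prefix of two lists. -/
def lcp {α : Type*} [DecidableEq α] : List α → List α → ℕ
  | a :: p, b :: q => if a = b then lcp p q + 1 else 0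
  | _, _ => 0

/-- `p` is a permutation of the finite set `s`: a duplicate-free list whose
set of elements is exactly `s`. -/
def IsPermOf {α : Type*} [DecidableEq α] (p : List α) (s : Finset α) : Prop :=
  p.Nodup ∧ p.toFinset = s

/-- Benefit of a solution of the tree (caterpillar) instance `T` with `m`
internal vertices `r_1, …, r_m` (with permutations `p 0, …, p (m-1)`) and `m`
leaves `w_1, …, w_m` (with permutations `q 0, …, q (m-1)`): the sum over the
edges `r_i r_{i+1}` and `r_i w_i` of the longest-common-prefix lengths. -/
def treeBenefit {α : Type*} [DecidableEq α] (m : ℕ) (p q : ℕ → List α) : ℕ :=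
  (∑ i ∈ Finset.range (m - 1), lcp (p i) (p (i + 1)))
    + ∑ i ∈ Finset.range m, lcp (p i) (q i)

/-- Benefit of a solution of the star instance `S` with root permutation `pr`
and leaf permutations `q 0, …, q (m-1)`. -/
def starBenefit {α : Type*} [DecidableEq α] (m : ℕ) (pr : List α)
    (q : ℕ → List α) : ℕ :=
  ∑ i ∈ Finset.range m, lcp pr (q i)

section AuxStmt6
variable {α : Type*} [DecidableEq α]

lemma lcp_nil_left (y : List α) : lcp [] y = 0 := by cases y <;> rfl
lemma lcp_nil_right (x : List α) : lcp x [] = 0 := by cases x <;> rfl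

lemma lcp_self (x : List α) : lcp x x = x.length := by
  induction x with
  | nil => rfl
  | cons a t ih => simp [lcp, ih]

lemma lcp_comm : ∀ (x y : List α), lcp x y = lcp y x
  | [], y => by rw [lcp_nil_left, lcp_nil_right]
  | x, [] => by rw [lcp_nil_left, lcp_nil_right]
  | a :: x, b :: y => by
    by_cases h : a = b
    · subst h; simp [lcp, lcp_comm x y]
    · simp [lcp, h, Ne.symm h]

lemma lcp_le_left : ∀ (x y : List α), lcp x y ≤ x.length
  | [], y => by simp [lcp_nil_left]
  | x, [] => by simp [lcp_nil_right]
  | a :: x, b :: y => by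
    by_cases h : a = b
    · simpa [lcp, h] using lcp_le_left x y
    · simp [lcp, h]

lemma lcp_le_right (x y : List α) : lcp x y ≤ y.length := by
  rw [lcp_comm]; exact lcp_le_left y x

lemma lcp_take : ∀ (x y : List α), x.take (lcp x y) = y.take (lcp x y)
  | [], y => by simp [lcp_nil_left]
  | x, [] => by simp [lcp_nil_right]
  | a :: x, b :: y => by
    by_cases h : a = b
    · subst h; simp [lcp, lcp_take x y]
    · simp [lcp, h]

lemma le_lcp : ∀ (x y : List α) (k : ℕ), k ≤ x.length → k ≤ y.length →
    x.take k = y.take k → k ≤ lcp x y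
  | _, _, 0, _, _, _ => Nat.zero_le _
  | [], _, k + 1, h1, _, _ => by simp at h1
  | _ :: _, [], k + 1, _, h2, _ => by simp at h2
  | a :: x, b :: y, k + 1, h1, h2, h3 => by
    simp only [List.take_succ_cons, List.cons.injEq] at h3
    obtain ⟨rfl, h3⟩ := h3
    simpa [lcp] using le_lcp x y k (Nat.le_of_succ_le_succ h1) (Nat.le_of_succ_le_succ h2) h3

lemma take_eq_of_le_lcp {x y : List α} {k : ℕ} (h : k ≤ lcp x y) :
    x.take k = y.take k := by
  have hh := lcp_take x y
  calc x.take k = (x.take (lcp x y)).take k := by rw [List.take_take, min_eq_left h]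
  _ = (y.take (lcp x y)).take k := by rw [hh]
  _ = y.take k := by rw [List.take_take, min_eq_left h]

lemma min_lcp_le {x y z : List α} : min (lcp x y) (lcp y z) ≤ lcp x z := by
  apply le_lcp
  · exact le_trans (min_le_left _ _) (lcp_le_left x y)
  · exact le_trans (min_le_right _ _) (lcp_le_right y z)
  · rw [take_eq_of_le_lcp (min_le_left _ _), take_eq_of_le_lcp (min_le_right (lcp x y) _)]

lemma lcp_le_card {x y : List α} {s : Finset α} (hx : x.Nodup)
    (h : ∀ a, a ∈ x → a ∈ y → a ∈ s) : lcp x y ≤ s.card := by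
  set t := x.take (lcp x y) with ht
  have hnd : t.Nodup := (List.take_sublist _ _).nodup hx
  have hsub : t.toFinset ⊆ s := by
    intro a ha
    rw [List.mem_toFinset] at ha
    refine h a (List.mem_of_mem_take ha) ?_
    have : a ∈ y.take (lcp x y) := by rw [← lcp_take]; exact ha
    exact List.mem_of_mem_take this
  have hlen : t.length = lcp x y := by
    rw [ht, List.length_take, min_eq_left (lcp_le_left x y)]
  calc lcp x y = t.toFinset.card := by rw [List.toFinset_card_of_nodup hnd, hlen]
  _ ≤ s.card := Finset.card_le_card hsub

lemma lcp_stable {x y z : List α} (h1 : lcp x z < lcp x y) (h2 : lcp y z < lcp x y) :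
    lcp x z = lcp y z := by
  apply le_antisymm
  · calc lcp x z = min (lcp y x) (lcp x z) :=
        (min_eq_right (by rw [lcp_comm y x]; exact le_of_lt h1)).symm
    _ ≤ lcp y z := min_lcp_le
  · calc lcp y z = min (lcp x y) (lcp y z) := (min_eq_right (le_of_lt h2)).symm
    _ ≤ lcp x z := min_lcp_le

lemma eq_of_length_le_lcp {x y : List α} (hl : x.length = y.length)
    (h : x.length ≤ lcp x y) : x = y := by
  have := take_eq_of_le_lcp h
  rwa [List.take_length, hl, List.take_length] at this

end AuxStmt6

/-- Caterpillar construction with `|L| > m·|a_r|`: in every optimal solution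
of the tree instance `T`, the permutations assigned to the internal vertices
are all identical; equivalently, `|p_i ∧ p_{i+1}| = |A|` for all
`1 ≤ i < m`. -/
theorem stmt6 {α : Type*} [DecidableEq α] (m : ℕ) (ar L : Finset α)
    (a : ℕ → Finset α)
    (hdisj : ∀ x ∈ L, x ∉ ar ∧ ∀ i < m, x ∉ a i)
    (hL : m * ar.card < L.card)
    (p q : ℕ → List α)
    (hp : ∀ i < m, IsPermOf (p i) (ar ∪ L))
    (hq : ∀ i < m, IsPermOf (q i) (a i))
    (hopt : ∀ p' q' : ℕ → List α, (∀ i < m, IsPermOf (p' i) (ar ∪ L)) →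
      (∀ i < m, IsPermOf (q' i) (a i)) →
      treeBenefit m p' q' ≤ treeBenefit m p q) :
    (∀ i j, i < m → j < m → p i = p j) ∧
    (∀ i, i + 1 < m → lcp (p i) (p (i + 1)) = (ar ∪ L).card) := by
  classical
  by_cases hm0 : m = 0
  · subst hm0
    exact ⟨fun i j hi => absurd hi (Nat.not_lt_zero i), fun i hi => by omega⟩
  have hm1 : 1 ≤ m := Nat.one_le_iff_ne_zero.2 hm0
  set n := (ar ∪ L).card with hn
  set c := ar.card with hc
  have hcard : n = c + L.card := by
    rw [hn, hc, Finset.card_union_of_disjoint]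
    exact Finset.disjoint_right.2 fun x hx => (hdisj x hx).1
  -- lengths of internal permutations
  have hlen : ∀ i, i < m → (p i).length = n := by
    intro i hi
    obtain ⟨hnd, hfs⟩ := hp i hi
    rw [hn, ← hfs, List.toFinset_card_of_nodup hnd]
  -- leaf lcp bound
  have hleaf : ∀ i j, i < m → j < m → lcp (p i) (q j) ≤ c := by
    intro i j hi hj
    obtain ⟨hnd, hfs⟩ := hp i hi
    obtain ⟨hndq, hfsq⟩ := hq j hj
    apply lcp_le_card hnd
    intro x hx1 hx2
    have hxA : x ∈ ar ∪ L := by rw [← hfs]; exact List.mem_toFinset.2 hx1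
    have hxa : x ∈ a j := by rw [← hfsq]; exact List.mem_toFinset.2 hx2
    rcases Finset.mem_union.1 hxA with h | h
    · exact h
    · exact absurd hxa ((hdisj x h).2 j hj)
  -- the exchange: all internal vertices get p 0
  have hexch := hopt (fun _ => p 0) q (fun i hi => hp 0 (by omega)) hq
  have hconst : treeBenefit m (fun _ => p 0) q
      = (m - 1) * n + ∑ i ∈ Finset.range m, lcp (p 0) (q i) := by
    unfold treeBenefit
    congr 1
    rw [Finset.sum_congr rfl fun i _ => by rw [lcp_self (p 0), hlen 0 (by omega)]]
    rw [Finset.sum_const, Finset.card_range, smul_eq_mul]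
  rw [hconst] at hexch
  rw [show treeBenefit m p q = (∑ i ∈ Finset.range (m - 1), lcp (p i) (p (i + 1)))
    + ∑ i ∈ Finset.range m, lcp (p i) (q i) from rfl] at hexch
  set B := ∑ i ∈ Finset.range (m - 1), lcp (p i) (p (i + 1)) with hB
  set S := ∑ i ∈ Finset.range m, lcp (p i) (q i) with hS
  set S0 := ∑ i ∈ Finset.range m, lcp (p 0) (q i) with hS0
  -- hexch : (m-1)*n + S0 ≤ B + S
  have hSle : S ≤ m * c := by
    calc S ≤ ∑ i ∈ Finset.range m, c :=
      Finset.sum_le_sum fun i hi => hleaf i i (Finset.mem_range.1 hi) (Finset.mem_range.1 hi)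
    _ = m * c := by rw [Finset.sum_const, Finset.card_range, smul_eq_mul]
  have hBle : ∀ e, e + 1 < m → B ≤ lcp (p e) (p (e + 1)) + (m - 2) * n := by
    intro e he
    have hemem : e ∈ Finset.range (m - 1) := Finset.mem_range.2 (by omega)
    rw [hB, ← Finset.add_sum_erase _ _ hemem]
    apply Nat.add_le_add_left
    calc ∑ i ∈ (Finset.range (m - 1)).erase e, lcp (p i) (p (i + 1))
        ≤ ∑ i ∈ (Finset.range (m - 1)).erase e, n := by
          apply Finset.sum_le_sum
          intro i hi
          have him : i < m - 1 := Finset.mem_range.1 (Finset.mem_of_mem_erase hi)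
          calc lcp (p i) (p (i + 1)) ≤ (p i).length := lcp_le_left _ _
          _ = n := hlen i (by omega)
    _ = (m - 2) * n := by
        rw [Finset.sum_const, smul_eq_mul, Finset.card_erase_of_mem hemem,
          Finset.card_range, show m - 1 - 1 = m - 2 by omega]
  have hsplit : (m - 1) * n = (m - 2) * n + n ∨ m = 1 := by
    rcases Nat.lt_or_ge m 2 with h | h
    · right; omega
    · left
      rw [show m - 1 = (m - 2) + 1 by omega, Nat.succ_mul]
  -- Step 1: every edge has lcp at least c + 1
  have hedge1 : ∀ e, e + 1 < m → c + 1 ≤ lcp (p e) (p (e + 1)) := by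
    intro e he
    have hm2 : 2 ≤ m := by omega
    have hsp : (m - 1) * n = (m - 2) * n + n := by
      rcases hsplit with h | h
      · exact h
      · omega
    have h1 : (m - 2) * n + n ≤ B + S := by
      rw [← hsp]
      calc (m - 1) * n ≤ (m - 1) * n + S0 := Nat.le_add_right _ _
      _ ≤ B + S := hexch
    have h2 := hBle e he
    have h3 : m * c + 1 ≤ L.card := hL
    linarith
  -- Step 2: chain: lcp (p i) (p (i+d)) ≥ c+1
  have hchain : ∀ d i, i + d < m → c + 1 ≤ lcp (p i) (p (i + d)) := by
    intro d
    induction d with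
    | zero =>
      intro i hi
      show c + 1 ≤ lcp (p i) (p i)
      rw [lcp_self, hlen i (by omega)]
      omega
    | succ d ih =>
      intro i hi
      have h1 := ih i (by omega)
      have h2 := hedge1 (i + d) (by omega)
      calc c + 1 ≤ min (lcp (p i) (p (i + d))) (lcp (p (i + d)) (p (i + d + 1))) :=
        le_min h1 h2
      _ ≤ lcp (p i) (p (i + d + 1)) := min_lcp_le
  -- Step 3: S0 = S
  have hS0S : S0 = S := by
    rw [hS0, hS]
    apply Finset.sum_congr rfl
    intro j hj
    have hjm : j < m := Finset.mem_range.1 hj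
    rcases Nat.eq_zero_or_pos j with rfl | hjpos
    · rfl
    have hcl : c + 1 ≤ lcp (p 0) (p j) := by
      have := hchain j 0 (by omega)
      simpa using this
    exact lcp_stable (Nat.lt_of_le_of_lt (hleaf 0 j (by omega) hjm) hcl)
      (Nat.lt_of_le_of_lt (hleaf j j hjm hjm) hcl)
  -- Step 4: every edge is full
  have hfull : ∀ i, i + 1 < m → lcp (p i) (p (i + 1)) = n := by
    intro i hi
    have hm2 : 2 ≤ m := by omega
    have hsp : (m - 1) * n = (m - 2) * n + n := by
      rcases hsplit with h | h
      · exact h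
      · omega
    have h1 : (m - 1) * n + S ≤ B + S := by
      have := hexch
      rwa [hS0S] at this
    have h2 : (m - 1) * n ≤ B := Nat.le_of_add_le_add_right h1
    have h3 := hBle i hi
    have h4 : n ≤ lcp (p i) (p (i + 1)) := by linarith
    exact le_antisymm (by calc lcp (p i) (p (i+1)) ≤ (p i).length := lcp_le_left _ _
      _ = n := hlen i (by omega)) h4
  have hadj : ∀ i, i + 1 < m → p i = p (i + 1) := by
    intro i hi
    apply eq_of_length_le_lcp (by rw [hlen i (by omega), hlen (i+1) hi])
    rw [hlen i (by omega), ← hfull i hi]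
  have hall : ∀ d i, i + d < m → p i = p (i + d) := by
    intro d
    induction d with
    | zero => intro i _; rfl
    | succ d ih =>
      intro i hi
      rw [ih i (by omega), hadj (i + d) (by omega)]
      rfl
  constructor
  · intro i j hi hj
    rcases Nat.le_total i j with h | h
    · have := hall (j - i) i (by omega)
      rwa [show i + (j - i) = j by omega] at this
    · have := hall (i - j) j (by omega)
      rw [show j + (i - j) = i by omega] at this
      exact this.symm
  · exact hfull
end

section
/- With the caterpillar construction and the additional hypothesis |L| > m·|a_r|: if the tree instance T has a solution of benefit k, then the star instance S has a solution of benefit at least k − Z, where Z = (m−1)·|A|. -/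
lemma lcp_le_length_left' {α : Type*} [DecidableEq α] :
    ∀ p q : List α, lcp p q ≤ p.length
  | [], _ => by simp [lcp]
  | _ :: _, [] => by simp [lcp]
  | a :: p, b :: q => by
    by_cases h : a = b
    · simpa [lcp, h] using lcp_le_length_left' p q
    · simp [lcp, h]

lemma lcp_self' {α : Type*} [DecidableEq α] : ∀ p : List α, lcp p p = p.length
  | [] => by simp [lcp]
  | a :: p => by simp [lcp, lcp_self' p]

lemma lcp_take' {α : Type*} [DecidableEq α] :
    ∀ p q : List α, p.take (lcp p q) = q.take (lcp p q)
  | [], _ => by simp [lcp]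
  | _ :: _, [] => by simp [lcp]
  | a :: p, b :: q => by
    by_cases h : a = b
    · simp [lcp, h, lcp_take' p q]
    · simp [lcp, h]

lemma le_lcp_of_take' {α : Type*} [DecidableEq α] :
    ∀ (n : ℕ) (p q : List α), p.take n = q.take n → n ≤ p.length → n ≤ lcp p q
  | 0, _, _ => by simp
  | n + 1, [], q => by simp
  | n + 1, a :: p, q => by
    match q with
    | [] => intro h _; simp at h
    | b :: q =>
      intro h hn
      simp only [List.take_succ_cons, List.cons.injEq] at h
      simp only [List.length_cons, Nat.add_le_add_iff_right] at hn
      rw [lcp, if_pos h.1]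
      exact Nat.add_le_add_right (le_lcp_of_take' n p q h.2 hn) 1

lemma lcp_ultra' {α : Type*} [DecidableEq α] :
    ∀ p q r : List α, min (lcp p q) (lcp q r) ≤ lcp p r
  | [], _, _ => by simp [lcp]
  | _ :: _, [], _ => by simp [lcp]
  | _ :: _, _ :: _, [] => by simp [lcp]
  | a :: p, b :: q, c :: r => by
    by_cases hab : a = b
    · by_cases hbc : b = c
      · subst hab; subst hbc
        have := lcp_ultra' p q r
        simp only [lcp, if_true, reduceIte]
        omega
      · simp [lcp, hbc]
    · simp [lcp, hab]

/-- Caterpillar construction with `|L| > m·|a_r|`: if the tree instance `T`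
has a solution of benefit `k`, then the star instance `S` has a solution of
benefit at least `k - Z`, where `Z = (m-1)·|A|`. -/
theorem stmt8 {α : Type*} [DecidableEq α] (m : ℕ) (ar L : Finset α)
    (a : ℕ → Finset α)
    (hdisj : ∀ x ∈ L, x ∉ ar ∧ ∀ i < m, x ∉ a i)
    (hL : m * ar.card < L.card)
    (k : ℕ) (p q : ℕ → List α)
    (hp : ∀ i < m, IsPermOf (p i) (ar ∪ L))
    (hq : ∀ i < m, IsPermOf (q i) (a i))
    (hk : treeBenefit m p q = k) :
    ∃ (pr : List α) (q' : ℕ → List α),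
      IsPermOf pr ar ∧ (∀ i < m, IsPermOf (q' i) (a i)) ∧
      k - (m - 1) * (ar ∪ L).card ≤ starBenefit m pr q' := by
  have htriv : ∀ i < m, IsPermOf ((a i).toList) (a i) :=
    fun i _ => ⟨Finset.nodup_toList _, Finset.toList_toFinset _⟩
  rcases Nat.eq_zero_or_pos m with hm0 | hm
  · subst hm0
    refine ⟨ar.toList, fun i => (a i).toList,
      ⟨Finset.nodup_toList _, Finset.toList_toFinset _⟩, htriv, ?_⟩
    simp [treeBenefit] at hk
    simp [← hk, starBenefit]
  -- lengths of the spine permutations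
  have hlenp : ∀ i < m, (p i).length = (ar ∪ L).card := by
    intro i hi
    obtain ⟨hn, ht⟩ := hp i hi
    rw [← ht, List.toFinset_card_of_nodup hn]
  have hsle : ∀ i < m, ∀ r : List α, lcp (p i) r ≤ (ar ∪ L).card :=
    fun i hi r => (lcp_le_length_left' _ _).trans_eq (hlenp i hi)
  -- elements of the common prefix of p i and q i lie in ar
  have hprefar : ∀ i < m, ∀ x ∈ (p i).take (lcp (p i) (q i)), x ∈ ar := by
    intro i hi x hx
    obtain ⟨hn, ht⟩ := hp i hi
    obtain ⟨hnq, htq⟩ := hq i hi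
    have hxp : x ∈ p i := List.take_subset _ _ hx
    have hxq : x ∈ q i := by
      rw [lcp_take' (p i) (q i)] at hx
      exact List.take_subset _ _ hx
    have hxA : x ∈ ar ∪ L := by
      rw [← ht]; exact List.mem_toFinset.mpr hxp
    rcases Finset.mem_union.mp hxA with h | h
    · exact h
    · exact absurd (by rw [← htq]; exact List.mem_toFinset.mpr hxq) ((hdisj x h).2 i hi)
  -- ℓ_i ≤ |ar|
  have hℓar : ∀ i < m, lcp (p i) (q i) ≤ ar.card := by
    intro i hi
    obtain ⟨hn, ht⟩ := hp i hi
    set ℓ := lcp (p i) (q i) with hℓ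
    have hlen : ((p i).take ℓ).length = ℓ := by
      rw [List.length_take]
      exact min_eq_left (lcp_le_length_left' _ _)
    have hnd : ((p i).take ℓ).Nodup := hn.sublist (List.take_sublist _ _)
    have hsub : ((p i).take ℓ).toFinset ⊆ ar := by
      intro x hx
      exact hprefar i hi x (List.mem_toFinset.mp hx)
    calc ℓ = ((p i).take ℓ).toFinset.card := by
          rw [List.toFinset_card_of_nodup hnd, hlen]
      _ ≤ ar.card := Finset.card_le_card hsub
  have harle : ar.card ≤ (ar ∪ L).card := Finset.card_le_card Finset.subset_union_left
  -- sum of leaf lcps is bounded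
  have hsumℓ : (∑ i ∈ Finset.range m, lcp (p i) (q i)) ≤ m * ar.card := by
    calc (∑ i ∈ Finset.range m, lcp (p i) (q i))
        ≤ (Finset.range m).card • ar.card :=
          Finset.sum_le_card_nsmul _ _ _ (fun i hi => hℓar i (Finset.mem_range.mp hi))
      _ = m * ar.card := by simp [smul_eq_mul]
  -- spine sum bounded by (m-1)*|A|
  have hspine : (∑ i ∈ Finset.range (m - 1), lcp (p i) (p (i + 1)))
      ≤ (m - 1) * (ar ∪ L).card := by
    calc (∑ i ∈ Finset.range (m - 1), lcp (p i) (p (i + 1)))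
        ≤ (Finset.range (m - 1)).card • (ar ∪ L).card :=
          Finset.sum_le_card_nsmul _ _ _
            (fun i hi => hsle i (lt_of_lt_of_le (Finset.mem_range.mp hi) (Nat.sub_le m 1)) _)
      _ = (m - 1) * (ar ∪ L).card := by simp [smul_eq_mul]
  by_cases hcase : ∀ i < m, lcp (p i) (q i) ≤ lcp (p 0) (p i)
  · -- Case 1: build the star solution from p 0 restricted to ar
    set pr : List α := (p 0).filter (fun x => x ∈ ar) with hpr
    obtain ⟨hn0, ht0⟩ := hp 0 hm
    have hprnd : pr.Nodup := hn0.filter _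
    have hprT : pr.toFinset = ar := by
      rw [hpr, List.toFinset_filter, ht0]
      ext x
      simp only [Finset.mem_filter, Finset.mem_union, decide_eq_true_eq]
      constructor
      · rintro ⟨_, h⟩; exact h
      · intro h; exact ⟨Or.inl h, h⟩
    have hprlen : pr.length = ar.card := by
      rw [← hprT, List.toFinset_card_of_nodup hprnd]
    -- per-leaf bound
    have hper : ∀ i < m, lcp (p i) (q i) ≤ lcp pr (q i) := by
      intro i hi
      set ℓ := lcp (p i) (q i) with hℓ
      have hℓ0 : ℓ ≤ lcp (p 0) (p i) := hcase i hi
      have htake0i : (p 0).take ℓ = (p i).take ℓ := by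
        have h := lcp_take' (p 0) (p i)
        calc (p 0).take ℓ = ((p 0).take (lcp (p 0) (p i))).take ℓ := by
              rw [List.take_take, min_eq_left hℓ0]
          _ = ((p i).take (lcp (p 0) (p i))).take ℓ := by rw [h]
          _ = (p i).take ℓ := by rw [List.take_take, min_eq_left hℓ0]
      have hℓlen0 : ℓ ≤ (p 0).length := by
        rw [hlenp 0 hm]
        exact (hℓar i hi).trans harle
      have hlen0 : ((p 0).take ℓ).length = ℓ := by
        rw [List.length_take]; exact min_eq_left hℓlen0
      have hfilter : ((p 0).take ℓ).filter (fun x => x ∈ ar) = (p 0).take ℓ := by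
        rw [List.filter_eq_self]
        intro x hx
        rw [htake0i] at hx
        exact decide_eq_true (hprefar i hi x hx)
      have hprtake : pr.take ℓ = (p 0).take ℓ := by
        conv_lhs => rw [hpr, ← List.take_append_drop ℓ (p 0)]
        rw [List.filter_append, hfilter]
        exact List.take_left' hlen0
      have htakeq : pr.take ℓ = (q i).take ℓ := by
        rw [hprtake, htake0i, hℓ]
        exact lcp_take' (p i) (q i)
      exact le_lcp_of_take' ℓ pr (q i) htakeq (by rw [hprlen]; exact hℓar i hi)
    refine ⟨pr, q, ⟨hprnd, hprT⟩, fun i hi => hq i hi, ?_⟩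
    rw [← hk, treeBenefit, starBenefit, tsub_le_iff_right]
    have : (∑ i ∈ Finset.range m, lcp (p i) (q i))
        ≤ ∑ i ∈ Finset.range m, lcp pr (q i) :=
      Finset.sum_le_sum (fun i hi => hper i (Finset.mem_range.mp hi))
    omega
  · -- Case 2: k ≤ Z, so k - Z = 0
    push_neg at hcase
    obtain ⟨i, hi, hlt⟩ := hcase
    -- chain bound
    have chain : ∀ j, j < m →
        (∑ t ∈ Finset.range j, lcp (p t) (p (t + 1))) + (ar ∪ L).card
          ≤ lcp (p 0) (p j) + j * (ar ∪ L).card := by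
      intro j
      induction j with
      | zero =>
        intro _
        rw [lcp_self', hlenp 0 hm]
        simp
      | succ n ih =>
        intro hj
        have hn : n < m := Nat.lt_of_succ_lt hj
        have hultra := lcp_ultra' (p 0) (p n) (p (n + 1))
        have h1 : lcp (p 0) (p n) ≤ (ar ∪ L).card := hsle 0 hm _
        have h2 : lcp (p n) (p (n + 1)) ≤ (ar ∪ L).card := hsle n hn _
        have key : lcp (p 0) (p n) + lcp (p n) (p (n + 1))
            ≤ lcp (p 0) (p (n + 1)) + (ar ∪ L).card := by
          rcases le_total (lcp (p 0) (p n)) (lcp (p n) (p (n + 1))) with h | h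
          · rw [min_eq_left h] at hultra; omega
          · rw [min_eq_right h] at hultra; omega
        have hih := ih hn
        rw [Finset.sum_range_succ, Nat.succ_mul]
        omega
    have hchaini := chain i hi
    have hi' : i ≤ m - 1 := by omega
    -- split the spine sum at i
    have hsplitS : (∑ t ∈ Finset.range (m - 1), lcp (p t) (p (t + 1)))
        ≤ (∑ t ∈ Finset.range i, lcp (p t) (p (t + 1))) + (m - 1 - i) * (ar ∪ L).card := by
      have hrest : (∑ t ∈ Finset.Ico i (m - 1), lcp (p t) (p (t + 1)))
          ≤ (m - 1 - i) * (ar ∪ L).card := by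
        calc (∑ t ∈ Finset.Ico i (m - 1), lcp (p t) (p (t + 1)))
            ≤ (Finset.Ico i (m - 1)).card • (ar ∪ L).card := by
              refine Finset.sum_le_card_nsmul _ _ _ ?_
              intro t ht
              have := Finset.mem_Ico.mp ht
              exact hsle t (by omega) _
          _ = (m - 1 - i) * (ar ∪ L).card := by rw [Nat.card_Ico, smul_eq_mul]
      have hsplit := Finset.sum_Ico_consecutive
        (fun t => lcp (p t) (p (t + 1))) (Nat.zero_le i) hi'
      rw [Finset.range_eq_Ico, Finset.range_eq_Ico]
      omega
    have hmul : i * (ar ∪ L).card + (m - 1 - i) * (ar ∪ L).card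
        = (m - 1) * (ar ∪ L).card := by
      rw [← add_mul, Nat.add_sub_cancel' hi']
    have hcardA : (ar ∪ L).card = ar.card + L.card := by
      refine Finset.card_union_of_disjoint ?_
      rw [Finset.disjoint_right]
      intro x hx
      exact (hdisj x hx).1
    have hℓi : lcp (p i) (q i) ≤ ar.card := hℓar i hi
    have hkZ : k ≤ (m - 1) * (ar ∪ L).card := by
      rw [← hk, treeBenefit]
      omega
    refine ⟨ar.toList, fun i => (a i).toList,
      ⟨Finset.nodup_toList _, Finset.toList_toFinset _⟩, htriv, ?_⟩
    rw [Nat.sub_eq_zero_of_le hkZ]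
    exact Nat.zero_le _
end
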